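/- arXiv:2605.04540 — 4 statements merged into one kernel-verified Lean document; each statement's English description precedes it below -/
import Mathlib

section
/- Let ρ = (1-μ)|v⟩⟨v| + μω be a density matrix with |v⟩ a unit vector, ω a density matrix, and 0 < μ < 1. Then for 0 < α < 1, the Rényi entropy satisfies S_α(ω) + (α/(1-α)) log μ ≤ S_α(ρ) ≤ (1/(1-α)) log[(1-μ)^α + μ^α e^{(1-α)S_α(ω)}]. -/
/-!
Sort the eigenvalues `P` of `ρ` and `Q` of `μ ω` decreasingly. Since `ρ - μ ω = (1 - μ) |v⟩⟨v|`
is positive of rank at most one, a Courant–Fischer dimension count gives Weyl monotonicity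
`Q k ≤ P k` and interlacing `P j ≤ Q i` for `i < j`. Monotonicity of `x ↦ x ^ α` turns the
first into `μ ^ α tr ω ^ α ≤ tr ρ ^ α`, the lower bound. Interlacing lets the concave increments
of `x ↦ x ^ α` telescope, giving the scalar Rotfel'd inequality
`∑ P ^ α ≤ (∑ P - ∑ Q) ^ α + ∑ Q ^ α = (1 - μ) ^ α + μ ^ α tr ω ^ α`, the upper bound.
-/

open Matrix BigOperators
open scoped ComplexOrder

open Finset
open scoped InnerProductSpace

theorem ConcaveOn.sub_le_sub_of_le {s : Set ℝ} {f : ℝ → ℝ} (hf : ConcaveOn ℝ s f) {x y d : ℝ}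
    (hx : x ∈ s) (hyd : y + d ∈ s) (hxy : x ≤ y) (hd : 0 ≤ d) :
    f (y + d) - f y ≤ f (x + d) - f x := by
  obtain hdeg | hlt := (show x ≤ y + d by linarith).eq_or_lt
  · obtain rfl : d = 0 := by linarith
    obtain rfl : x = y := by linarith
    rfl
  -- `x + d` and `y` are the two convex combinations of `x` and `y + d` with swapped weights.
  set θ := d / (y + d - x)
  have hθd : θ * (y + d - x) = d := div_mul_cancel₀ d (by linarith)
  have hθ0 : 0 ≤ θ := div_nonneg hd (by linarith)
  have hθ1 : θ ≤ 1 := (div_le_one (by linarith)).2 (by linarith)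
  have h₁ := hf.2 hx hyd (sub_nonneg.2 hθ1) hθ0 (by ring)
  have h₂ := hf.2 hx hyd hθ0 (sub_nonneg.2 hθ1) (by ring)
  simp only [smul_eq_mul] at h₁ h₂
  rw [show (1 - θ) * x + θ * (y + d) = x + d by linear_combination hθd] at h₁
  rw [show θ * x + (1 - θ) * (y + d) = y by linear_combination -hθd] at h₂
  linarith

section Interlacing

variable {ι : Type*} [LinearOrder ι] {p q : ι → ℝ}

theorem sum_sub_le_of_interlace (hq : ∀ i, 0 ≤ q i) (hpq : ∀ i j, i < j → p j ≤ q i)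
    {a : ι} {s : Finset ι} (hs : ∀ i ∈ s, a < i) : ∑ i ∈ s, (p i - q i) ≤ q a := by
  induction s using Finset.induction_on_min generalizing a with
  | empty => simpa using hq a
  | insert b t hbt ih =>
    rw [sum_insert fun hb => (hbt b hb).false]
    have hrest := ih hbt
    have hab := hpq a b (hs b (mem_insert_self b t))
    linarith

theorem ConcaveOn.sum_le_of_interlace {f : ℝ → ℝ} (hf : ConcaveOn ℝ (Set.Ici 0) f)
    (hq : ∀ i, 0 ≤ q i) (hqp : ∀ i, q i ≤ p i) (hpq : ∀ i j, i < j → p j ≤ q i)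
    (s : Finset ι) :
    ∑ i ∈ s, f (p i) + f 0 ≤ f (∑ i ∈ s, (p i - q i)) + ∑ i ∈ s, f (q i) := by
  induction s using Finset.induction_on_min with
  | empty => simp
  | insert a t hat ih =>
    have ha : a ∉ t := fun h => (hat a h).false
    rw [sum_insert ha, sum_insert ha, sum_insert ha]
    set d := ∑ i ∈ t, (p i - q i)
    have hd0 : 0 ≤ d := sum_nonneg fun i _ => sub_nonneg.2 (hqp i)
    have hdq : d ≤ q a := sum_sub_le_of_interlace hq hpq hat
    -- concavity lets the increment `p a - q a` be moved from `q a` down to `d ≤ q a`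
    have hinc := hf.sub_le_sub_of_le (Set.mem_Ici.2 hd0)
      (show q a + (p a - q a) ∈ Set.Ici 0 by simpa using (hq a).trans (hqp a)) hdq
      (sub_nonneg.2 (hqp a))
    rw [add_sub_cancel] at hinc
    rw [add_comm (p a - q a)]
    linarith

end Interlacing

theorem one_le_sum_rpow {ι : Type*} {s : Finset ι} {x : ι → ℝ} (hx : ∀ i ∈ s, 0 ≤ x i)
    (hsum : ∑ i ∈ s, x i = 1) {α : ℝ} (hα : α ≤ 1) : 1 ≤ ∑ i ∈ s, x i ^ α :=
  hsum ▸ sum_le_sum fun i hi =>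
    Real.self_le_rpow_of_le_one (hx i hi) (hsum ▸ single_le_sum hx hi) hα

theorem Submodule.finrank_add_finrank_le_finrank_inf_add {K V : Type*} [DivisionRing K]
    [AddCommGroup V] [Module K V] [FiniteDimensional K V] (s t : Submodule K V) :
    Module.finrank K s + Module.finrank K t ≤
      Module.finrank K ↥(s ⊓ t) + Module.finrank K V := by
  have := Submodule.finrank_sup_add_finrank_inf_eq s t
  have := (s ⊔ t).finrank_le
  omega

namespace OrthonormalBasis

variable {ι 𝕜 E : Type*} [Fintype ι] [RCLike 𝕜] [NormedAddCommGroup E] [InnerProductSpace 𝕜 E]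
  (b : OrthonormalBasis ι 𝕜 E)

theorem repr_apply_eq_zero_of_mem_span {s : Set ι} {x : E}
    (hx : x ∈ Submodule.span 𝕜 (b '' s)) {i : ι} (hi : i ∉ s) : b.repr x i = 0 := by
  have hspan : Submodule.span 𝕜 (b '' s) ≤ (𝕜 ∙ b i)ᗮ := by
    rw [Submodule.span_le]
    rintro _ ⟨j, hj, rfl⟩
    exact Submodule.mem_orthogonal_singleton_iff_inner_right.2
      (b.orthonormal.2 (ne_of_mem_of_not_mem hj hi).symm)
  rw [b.repr_apply_apply]
  exact Submodule.mem_orthogonal_singleton_iff_inner_right.1 (hspan hx)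

theorem finrank_span_image (s : Finset ι) :
    Module.finrank 𝕜 (Submodule.span 𝕜 (b '' s)) = s.card := by
  rw [Set.image_eq_range]
  exact (finrank_span_eq_card
    (b.orthonormal.linearIndependent.comp _ Subtype.val_injective)).trans (by simp)

end OrthonormalBasis

namespace LinearMap.IsSymmetric

open RCLike

variable {𝕜 E : Type*} [RCLike 𝕜] [NormedAddCommGroup E] [InnerProductSpace 𝕜 E]
  [FiniteDimensional 𝕜 E] {T S : E →ₗ[𝕜] E} {n : ℕ} (hn : Module.finrank 𝕜 E = n)

theorem re_inner_apply_self_eq_sum (hT : T.IsSymmetric) (x : E) :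
    re ⟪T x, x⟫_𝕜 = ∑ i, hT.eigenvalues hn i * ‖(hT.eigenvectorBasis hn).repr x i‖ ^ 2 := by
  rw [← (hT.eigenvectorBasis hn).repr.inner_map_map, PiLp.inner_apply, map_sum]
  refine Finset.sum_congr rfl fun i _ => ?_
  rw [eigenvectorBasis_apply_self_apply, inner_apply, map_mul (starRingEnd 𝕜), conj_ofReal,
    mul_left_comm, mul_conj, ← ofReal_pow, re_ofReal_mul, ofReal_re]

theorem eigenvalues_mul_norm_sq_le_re_inner (hT : T.IsSymmetric) {k : Fin n} {x : E}
    (hx : x ∈ Submodule.span 𝕜 (hT.eigenvectorBasis hn '' Set.Iic k)) :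
    hT.eigenvalues hn k * ‖x‖ ^ 2 ≤ re ⟪T x, x⟫_𝕜 := by
  rw [re_inner_apply_self_eq_sum hn hT, ← (hT.eigenvectorBasis hn).repr.norm_map,
    EuclideanSpace.norm_sq_eq, mul_sum]
  refine sum_le_sum fun i _ => ?_
  by_cases hi : i ≤ k
  · exact mul_le_mul_of_nonneg_right (hT.eigenvalues_antitone hn hi) (by positivity)
  · simp [OrthonormalBasis.repr_apply_eq_zero_of_mem_span _ hx hi]

theorem re_inner_le_eigenvalues_mul_norm_sq (hT : T.IsSymmetric) {k : Fin n} {x : E}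
    (hx : x ∈ Submodule.span 𝕜 (hT.eigenvectorBasis hn '' Set.Ici k)) :
    re ⟪T x, x⟫_𝕜 ≤ hT.eigenvalues hn k * ‖x‖ ^ 2 := by
  rw [re_inner_apply_self_eq_sum hn hT, ← (hT.eigenvectorBasis hn).repr.norm_map,
    EuclideanSpace.norm_sq_eq, mul_sum]
  refine sum_le_sum fun i _ => ?_
  by_cases hi : k ≤ i
  · exact mul_le_mul_of_nonneg_right (hT.eigenvalues_antitone hn hi) (by positivity)
  · simp [OrthonormalBasis.repr_apply_eq_zero_of_mem_span _ hx hi]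

/-- Courant–Fischer: by the dimension count `hjk`, the subspace `U` meets the span of the first
`j + 1` eigenvectors of `T` and the span of the last `n - k` eigenvectors of `S`. -/
theorem mul_eigenvalues_le_mul_eigenvalues (hT : T.IsSymmetric) (hS : S.IsSymmetric) {a b : ℝ}
    (ha : 0 ≤ a) (hb : 0 ≤ b) {U : Submodule 𝕜 E}
    (hU : ∀ x ∈ U, a * re ⟪T x, x⟫_𝕜 ≤ b * re ⟪S x, x⟫_𝕜) {j k : Fin n}
    (hjk : n + k ≤ j + Module.finrank 𝕜 U) :
    a * hT.eigenvalues hn j ≤ b * hS.eigenvalues hn k := by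
  set V := Submodule.span 𝕜 (hT.eigenvectorBasis hn '' Set.Iic j)
  set W := Submodule.span 𝕜 (hS.eigenvectorBasis hn '' Set.Ici k)
  have hV : Module.finrank 𝕜 V = j + 1 := by
    rw [← Fin.card_Iic, ← (hT.eigenvectorBasis hn).finrank_span_image, Finset.coe_Iic]
  have hW : Module.finrank 𝕜 W = n - k := by
    rw [← Fin.card_Ici, ← (hS.eigenvectorBasis hn).finrank_span_image, Finset.coe_Ici]
  have hVWU : 0 < Module.finrank 𝕜 ↥(V ⊓ W ⊓ U) := by
    have := V.finrank_add_finrank_le_finrank_inf_add W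
    have := (V ⊓ W).finrank_add_finrank_le_finrank_inf_add U
    have := k.isLt
    omega
  obtain ⟨⟨x, ⟨hxV, hxW⟩, hxU⟩, hx0⟩ := Module.finrank_pos_iff_exists_ne_zero.1 hVWU
  have hx : 0 < ‖x‖ ^ 2 := by
    have : x ≠ 0 := fun h => hx0 (Subtype.ext h)
    positivity
  refine le_of_mul_le_mul_right ?_ hx
  calc a * hT.eigenvalues hn j * ‖x‖ ^ 2
      ≤ a * re ⟪T x, x⟫_𝕜 := by
        rw [mul_assoc]
        exact mul_le_mul_of_nonneg_left (eigenvalues_mul_norm_sq_le_re_inner hn hT hxV) ha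
    _ ≤ b * re ⟪S x, x⟫_𝕜 := hU x hxU
    _ ≤ b * hS.eigenvalues hn k * ‖x‖ ^ 2 := by
        rw [mul_assoc]
        exact mul_le_mul_of_nonneg_left (re_inner_le_eigenvalues_mul_norm_sq hn hS hxW) hb

end LinearMap.IsSymmetric

namespace Matrix

open RCLike

theorem IsHermitian.sum_comp_eigenvalues {𝕜 ι M : Type*} [RCLike 𝕜] [Fintype ι]
    [DecidableEq ι] [AddCommMonoid M] {A : Matrix ι ι 𝕜} (hA : A.IsHermitian) (f : ℝ → M) :
    ∑ i, f (hA.eigenvalues i) = ∑ k, f (hA.eigenvalues₀ k) :=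
  (Fintype.equivOfCardEq (Fintype.card_fin _)).symm.sum_comp (f ∘ hA.eigenvalues₀)

theorem IsHermitian.sum_eigenvalues_eq_re_trace {𝕜 ι : Type*} [RCLike 𝕜] [Fintype ι]
    [DecidableEq ι] {A : Matrix ι ι 𝕜} (hA : A.IsHermitian) :
    ∑ i, hA.eigenvalues i = re A.trace := by
  simp [hA.trace_eq_sum_eigenvalues]

theorem PosSemidef.eigenvalues₀_nonneg {𝕜 ι : Type*} [RCLike 𝕜] [Fintype ι] [DecidableEq ι]
    {A : Matrix ι ι 𝕜} (hA : A.PosSemidef) (k : Fin (Fintype.card ι)) :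
    0 ≤ hA.1.eigenvalues₀ k :=
  (isPositive_toEuclideanLin_iff.2 hA).nonneg_eigenvalues finrank_euclideanSpace k

variable {ι : Type*} [Fintype ι] [DecidableEq ι]

theorem re_inner_toEuclideanLin_mixture {μ : ℝ} (v : ι → ℂ) (ω : Matrix ι ι ℂ)
    (x : EuclideanSpace ℂ ι) :
    re ⟪toEuclideanLin (((1 - μ : ℝ) : ℂ) • vecMulVec v (star v) + (μ : ℂ) • ω) x, x⟫_ℂ =
      (1 - μ) * ‖⟪WithLp.toLp 2 v, x⟫_ℂ‖ ^ 2 + μ * re ⟪toEuclideanLin ω x, x⟫_ℂ := by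
  simp only [re_to_complex]
  rw [← InnerProductSpace.symm_toEuclideanLin_rankOne, map_add, map_smul, map_smul,
    LinearEquiv.apply_symm_apply, LinearMap.add_apply, LinearMap.smul_apply,
    LinearMap.smul_apply, inner_add_left, inner_smul_left, inner_smul_left,
    ContinuousLinearMap.coe_coe, InnerProductSpace.rankOne_apply, inner_smul_left,
    Complex.conj_ofReal, Complex.conj_ofReal, Complex.conj_mul', ← Complex.ofReal_pow,
    ← Complex.ofReal_mul, Complex.add_re, Complex.ofReal_re, Complex.re_ofReal_mul]

theorem IsHermitian.mul_eigenvalues₀_le_eigenvalues₀_mixture {μ : ℝ} (hμ0 : 0 ≤ μ)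
    (hμ1 : μ ≤ 1) (v : ι → ℂ) {ω ρ : Matrix ι ι ℂ} (hω : ω.IsHermitian) (hρ : ρ.IsHermitian)
    (hρdef : ρ = ((1 - μ : ℝ) : ℂ) • vecMulVec v (star v) + (μ : ℂ) • ω)
    (k : Fin (Fintype.card ι)) :
    μ * hω.eigenvalues₀ k ≤ hρ.eigenvalues₀ k := by
  subst hρdef
  have hU (x : EuclideanSpace ℂ ι) (_ : x ∈ (⊤ : Submodule ℂ (EuclideanSpace ℂ ι))) :
      μ * re ⟪toEuclideanLin ω x, x⟫_ℂ ≤ 1 * re ⟪toEuclideanLin (((1 - μ : ℝ) : ℂ) •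
        vecMulVec v (star v) + (μ : ℂ) • ω) x, x⟫_ℂ := by
    rw [one_mul, re_inner_toEuclideanLin_mixture]
    have : 0 ≤ (1 - μ) * ‖⟪WithLp.toLp 2 v, x⟫_ℂ‖ ^ 2 :=
      mul_nonneg (sub_nonneg.2 hμ1) (sq_nonneg _)
    linarith
  have h := LinearMap.IsSymmetric.mul_eigenvalues_le_mul_eigenvalues finrank_euclideanSpace
    (isSymmetric_toEuclideanLin_iff.2 hω) (isSymmetric_toEuclideanLin_iff.2 hρ) hμ0
    zero_le_one hU (j := k) (k := k) (by rw [finrank_top, finrank_euclideanSpace]; omega)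
  rwa [one_mul] at h

theorem IsHermitian.eigenvalues₀_mixture_le_mul_eigenvalues₀ {μ : ℝ} (hμ0 : 0 ≤ μ)
    (v : ι → ℂ) {ω ρ : Matrix ι ι ℂ} (hω : ω.IsHermitian) (hρ : ρ.IsHermitian)
    (hρdef : ρ = ((1 - μ : ℝ) : ℂ) • vecMulVec v (star v) + (μ : ℂ) • ω)
    {i j : Fin (Fintype.card ι)} (hij : i < j) :
    hρ.eigenvalues₀ j ≤ μ * hω.eigenvalues₀ i := by
  subst hρdef
  have hU (x : EuclideanSpace ℂ ι) (hx : x ∈ (ℂ ∙ WithLp.toLp 2 v)ᗮ) :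
      1 * re ⟪toEuclideanLin (((1 - μ : ℝ) : ℂ) • vecMulVec v (star v) + (μ : ℂ) • ω) x,
        x⟫_ℂ ≤ μ * re ⟪toEuclideanLin ω x, x⟫_ℂ := by
    rw [one_mul, re_inner_toEuclideanLin_mixture,
      Submodule.mem_orthogonal_singleton_iff_inner_right.1 hx]
    simp
  have hUrank : Fintype.card ι ≤ Module.finrank ℂ (ℂ ∙ WithLp.toLp 2 v)ᗮ + 1 := by
    have := (ℂ ∙ WithLp.toLp 2 v).finrank_add_finrank_orthogonal
    have : Module.finrank ℂ (ℂ ∙ WithLp.toLp 2 v) ≤ 1 :=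
      (finrank_span_le_card _).trans (by simp)
    rw [finrank_euclideanSpace] at *
    omega
  have h := LinearMap.IsSymmetric.mul_eigenvalues_le_mul_eigenvalues finrank_euclideanSpace
    (isSymmetric_toEuclideanLin_iff.2 hρ) (isSymmetric_toEuclideanLin_iff.2 hω) zero_le_one
    hμ0 hU
    (show Fintype.card ι + i ≤ j + Module.finrank ℂ (ℂ ∙ WithLp.toLp 2 v)ᗮ by omega)
  rwa [one_mul] at h

section Mixture

variable {μ α : ℝ} (v : ι → ℂ) {ω ρ : Matrix ι ι ℂ}

theorem IsHermitian.rpow_mul_sum_rpow_eigenvalues_le_mixture (hμ0 : 0 ≤ μ) (hμ1 : μ ≤ 1)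
    (hα0 : 0 ≤ α) (hω : ω.PosSemidef) (hρ : ρ.IsHermitian)
    (hρdef : ρ = ((1 - μ : ℝ) : ℂ) • vecMulVec v (star v) + (μ : ℂ) • ω) :
    μ ^ α * ∑ i, hω.1.eigenvalues i ^ α ≤ ∑ i, hρ.eigenvalues i ^ α := by
  rw [hω.1.sum_comp_eigenvalues (· ^ α), hρ.sum_comp_eigenvalues (· ^ α), mul_sum]
  refine sum_le_sum fun k _ => ?_
  rw [← Real.mul_rpow hμ0 (hω.eigenvalues₀_nonneg k)]
  exact Real.rpow_le_rpow (mul_nonneg hμ0 (hω.eigenvalues₀_nonneg k))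
    (hω.1.mul_eigenvalues₀_le_eigenvalues₀_mixture hμ0 hμ1 v hρ hρdef k) hα0

theorem IsHermitian.sum_rpow_eigenvalues_mixture_le (hμ0 : 0 ≤ μ) (hμ1 : μ ≤ 1)
    (hα0 : 0 < α) (hα1 : α ≤ 1) (hω : ω.PosSemidef) (hωtr : ω.trace = 1)
    (hρ : ρ.IsHermitian) (hρtr : ρ.trace = 1)
    (hρdef : ρ = ((1 - μ : ℝ) : ℂ) • vecMulVec v (star v) + (μ : ℂ) • ω) :
    ∑ i, hρ.eigenvalues i ^ α ≤ (1 - μ) ^ α + μ ^ α * ∑ i, hω.1.eigenvalues i ^ α := by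
  have hsum (A : Matrix ι ι ℂ) (hA : A.IsHermitian) (htr : A.trace = 1) :
      ∑ k, hA.eigenvalues₀ k = 1 := by
    calc ∑ k, hA.eigenvalues₀ k = ∑ i, hA.eigenvalues i :=
          (hA.sum_comp_eigenvalues fun x => x).symm
      _ = 1 := by simpa [htr] using hA.sum_eigenvalues_eq_re_trace
  have key := (Real.concaveOn_rpow hα0.le hα1).sum_le_of_interlace
    (p := hρ.eigenvalues₀) (q := fun k => μ * hω.1.eigenvalues₀ k)
    (fun k => mul_nonneg hμ0 (hω.eigenvalues₀_nonneg k))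
    (hω.1.mul_eigenvalues₀_le_eigenvalues₀_mixture hμ0 hμ1 v hρ hρdef)
    (fun i j hij => hω.1.eigenvalues₀_mixture_le_mul_eigenvalues₀ hμ0 v hρ hρdef hij) univ
  rw [sum_sub_distrib, hsum ρ hρ hρtr, ← mul_sum, hsum ω hω.1 hωtr, mul_one,
    Real.zero_rpow hα0.ne', add_zero] at key
  rw [hω.1.sum_comp_eigenvalues (· ^ α), hρ.sum_comp_eigenvalues (· ^ α), mul_sum]
  convert key using 2
  exact sum_congr rfl fun k _ => (Real.mul_rpow hμ0 (hω.eigenvalues₀_nonneg k)).symm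

end Mixture

end Matrix

theorem renyi_entropy_sandwich_general (n : ℕ) (μ : ℝ) (hμ0 : 0 < μ) (hμ1 : μ < 1)
    (v : Fin n → ℂ)
    (ω : Matrix (Fin n) (Fin n) ℂ) (hω : ω.PosSemidef) (hωtr : ω.trace = 1)
    (ρ : Matrix (Fin n) (Fin n) ℂ)
    (hρdef : ρ = ((1 - μ : ℝ) : ℂ) • vecMulVec v (star v) + (μ : ℂ) • ω)
    (hρ : ρ.PosSemidef) (hρtr : ρ.trace = 1)
    (α : ℝ) (hα0 : 0 < α) (hα1 : α < 1) :
    (1 / (1 - α)) * Real.log (∑ i, (hω.1.eigenvalues i) ^ α) + (α / (1 - α)) * Real.log μ ≤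
        (1 / (1 - α)) * Real.log (∑ i, (hρ.1.eigenvalues i) ^ α) ∧
      (1 / (1 - α)) * Real.log (∑ i, (hρ.1.eigenvalues i) ^ α) ≤
        (1 / (1 - α)) * Real.log ((1 - μ) ^ α +
          μ ^ α * Real.exp ((1 - α) *
            ((1 / (1 - α)) * Real.log (∑ i, (hω.1.eigenvalues i) ^ α)))) := by
  set Sω := ∑ i, hω.1.eigenvalues i ^ α
  set Sρ := ∑ i, hρ.1.eigenvalues i ^ α
  have hlower : μ ^ α * Sω ≤ Sρ :=
    hρ.1.rpow_mul_sum_rpow_eigenvalues_le_mixture v hμ0.le hμ1.le hα0.le hω hρdef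
  have hupper : Sρ ≤ (1 - μ) ^ α + μ ^ α * Sω :=
    hρ.1.sum_rpow_eigenvalues_mixture_le v hμ0.le hμ1.le hα0 hα1.le hω hωtr hρtr hρdef
  have hSω : 0 < Sω := one_pos.trans_le <|
    one_le_sum_rpow (fun i _ => hω.eigenvalues_nonneg i)
      (by simpa [hωtr] using hω.1.sum_eigenvalues_eq_re_trace) hα1.le
  have hμα : 0 < μ ^ α := Real.rpow_pos_of_pos hμ0 α
  have hc : 0 ≤ 1 / (1 - α) := one_div_nonneg.2 (by linarith)
  constructor
  · calc (1 / (1 - α)) * Real.log Sω + (α / (1 - α)) * Real.log μ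
        = (1 / (1 - α)) * Real.log (μ ^ α * Sω) := by
          rw [Real.log_mul hμα.ne' hSω.ne', Real.log_rpow hμ0]; ring
      _ ≤ (1 / (1 - α)) * Real.log Sρ :=
          mul_le_mul_of_nonneg_left (Real.log_le_log (mul_pos hμα hSω) hlower) hc
  · rw [← mul_assoc, mul_one_div_cancel (by linarith), one_mul, Real.exp_log hSω]
    exact mul_le_mul_of_nonneg_left
      (Real.log_le_log ((mul_pos hμα hSω).trans_le hlower) hupper) hc

/-- For ρ = (1-μ)|v⟩⟨v| + μω a density matrix with |v⟩ a unit vector, ω a density matrix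
and 0 < μ < 1, and 0 < α < 1, the Rényi entropy S_α(ρ) = (1/(1-α)) log tr(ρ^α) satisfies
S_α(ω) + (α/(1-α)) log μ ≤ S_α(ρ) ≤ (1/(1-α)) log[(1-μ)^α + μ^α e^{(1-α)S_α(ω)}]. -/
theorem renyi_entropy_sandwich (n : ℕ) (hn : 0 < n) (μ : ℝ) (hμ0 : 0 < μ) (hμ1 : μ < 1)
    (v : Fin n → ℂ) (hv : star v ⬝ᵥ v = 1)
    (ω : Matrix (Fin n) (Fin n) ℂ) (hω : ω.PosSemidef) (hωtr : ω.trace = 1)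
    (ρ : Matrix (Fin n) (Fin n) ℂ)
    (hρdef : ρ = ((1 - μ : ℝ) : ℂ) • vecMulVec v (star v) + (μ : ℂ) • ω)
    (hρ : ρ.PosSemidef) (hρtr : ρ.trace = 1)
    (α : ℝ) (hα0 : 0 < α) (hα1 : α < 1) :
    (1 / (1 - α)) * Real.log (∑ i, (hω.1.eigenvalues i) ^ α) + (α / (1 - α)) * Real.log μ ≤
        (1 / (1 - α)) * Real.log (∑ i, (hρ.1.eigenvalues i) ^ α) ∧
      (1 / (1 - α)) * Real.log (∑ i, (hρ.1.eigenvalues i) ^ α) ≤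
        (1 / (1 - α)) * Real.log ((1 - μ) ^ α +
          μ ^ α * Real.exp ((1 - α) *
            ((1 / (1 - α)) * Real.log (∑ i, (hω.1.eigenvalues i) ^ α)))) :=
  renyi_entropy_sandwich_general n μ hμ0 hμ1 v ω hω hωtr ρ hρdef hρ hρtr α hα0 hα1
end

section
/- Let ρ = (1-μ)|v⟩⟨v| + μω be a density matrix with |v⟩ a unit vector, ω a density matrix, 0 < μ < 1. Set a = ⟨v|ω|v⟩, β = ‖ω‖_∞, m = ⟨v|ρ|v⟩ = 1 - μ + μa, and Δ = 1 - μ + μa - μβ. If Δ > 0 and |λ₁⟩ is a unit eigenvector for the largest eigenvalue λ₁ of ρ, then 1 - |⟨λ₁|v⟩|² ≤ μ²(⟨v|ω²|v⟩ - a²)/Δ² ≤ μ² a/Δ². -/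
open Matrix
open scoped ComplexOrder

/-!
Write `m = ⟨v|ρ|v⟩`. On the hyperplane `v⊥` the quadratic form of `ρ` is that of `μω`, hence at
most `μβ`. Since `λ₁ ≥ m > μβ`, testing `ρ` on the plane spanned by `|λ₁⟩` and a vector
`u ⊥ |λ₁⟩` (which meets `v⊥`) shows that `ρ ≤ μβ` on `|λ₁⟩⊥`, i.e. `λ₂ ≤ μβ`. Splitting `v`
along `|λ₁⟩` and its orthogonal complement `u`, which `ρ - m` preserves, gives
`‖(ρ - m)v‖² ≥ ‖(ρ - m)u‖² ≥ Δ² ‖u‖² = Δ² (1 - |⟨λ₁|v⟩|²)`, while `(ρ - m)v = μ(ωv - a v)` has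
squared norm `μ²(⟨v|ω²|v⟩ - a²)`. Finally `ω² ≤ ω`, as the spectrum of `ω` lies in `[0, 1]`.
-/

section InnerProductSpace

open scoped InnerProductSpace
open RCLike

variable {𝕜 E : Type*} [RCLike 𝕜] [NormedAddCommGroup E] [InnerProductSpace 𝕜 E]

theorem norm_add_sq_of_inner_eq_zero {x y : E} (h : ⟪x, y⟫_𝕜 = 0) :
    ‖x + y‖ ^ 2 = ‖x‖ ^ 2 + ‖y‖ ^ 2 := by
  rw [norm_add_sq (𝕜 := 𝕜), h, map_zero, mul_zero, add_zero]

theorem norm_sub_re_inner_smul_sq {v : E} (hv : ‖v‖ = 1) (y : E) :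
    ‖y - (re ⟪v, y⟫_𝕜 : 𝕜) • v‖ ^ 2 = ‖y‖ ^ 2 - re ⟪v, y⟫_𝕜 ^ 2 := by
  rw [norm_sub_sq (𝕜 := 𝕜), inner_smul_right, re_ofReal_mul, inner_re_symm, norm_smul, hv,
    norm_ofReal, mul_one, sq_abs]
  ring

theorem LinearMap.sub_mul_norm_le_norm_apply_sub_smul (T : E →ₗ[𝕜] E) {u : E} {c : ℝ}
    (hu : re ⟪u, T u⟫_𝕜 ≤ c * ‖u‖ ^ 2) (m : ℝ) : (m - c) * ‖u‖ ≤ ‖T u - (m : 𝕜) • u‖ := by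
  rcases (norm_nonneg u).eq_or_lt with hu₀ | hu₀
  · rw [← hu₀, mul_zero]
    exact norm_nonneg _
  refine le_of_mul_le_mul_left ?_ hu₀
  calc ‖u‖ * ((m - c) * ‖u‖) ≤ re ⟪u, (m : 𝕜) • u - T u⟫_𝕜 := by
        rw [inner_sub_right, inner_smul_right, map_sub, re_ofReal_mul, inner_self_eq_norm_sq]
        linarith
    _ ≤ ‖u‖ * ‖T u - (m : 𝕜) • u‖ := norm_sub_rev (T u) _ ▸ re_inner_le_norm _ _

namespace LinearMap.IsSymmetric

variable {T : E →ₗ[𝕜] E}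

theorem inner_apply_eq_zero_of_eigenvector (hT : T.IsSymmetric) {w u : E} {lam : 𝕜}
    (hw : T w = lam • w) (hu : ⟪w, u⟫_𝕜 = 0) : ⟪w, T u⟫_𝕜 = 0 := by
  rw [← hT, hw, inner_smul_left, hu, mul_zero]

theorem re_inner_add_apply_add_of_eigenvector (hT : T.IsSymmetric) {y z : E} {lam : ℝ}
    (hz : T z = (lam : 𝕜) • z) (hzy : ⟪z, y⟫_𝕜 = 0) :
    re ⟪y + z, T (y + z)⟫_𝕜 = re ⟪y, T y⟫_𝕜 + lam * ‖z‖ ^ 2 := by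
  rw [map_add, inner_add_left, inner_add_right, inner_add_right,
    inner_apply_eq_zero_of_eigenvector hT hz hzy, hz, inner_smul_right, inner_smul_right,
    inner_eq_zero_symm.1 hzy]
  simp

theorem re_inner_apply_le_of_inner_eq_zero (hT : T.IsSymmetric) {v w : E} {lam c : ℝ}
    (hw₀ : w ≠ 0) (hw : T w = (lam : 𝕜) • w) (hc : c < lam)
    (hv : ∀ x, ⟪v, x⟫_𝕜 = 0 → re ⟪x, T x⟫_𝕜 ≤ c * ‖x‖ ^ 2) {u : E} (hu : ⟪w, u⟫_𝕜 = 0) :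
    re ⟪u, T u⟫_𝕜 ≤ c * ‖u‖ ^ 2 := by
  have hvw : ⟪v, w⟫_𝕜 ≠ 0 := by
    intro hvw
    have hw' := hv w hvw
    rw [hw, inner_smul_right, re_ofReal_mul, inner_self_eq_norm_sq] at hw'
    nlinarith [pow_pos (norm_pos_iff.2 hw₀) 2]
  -- Courant–Fischer: correct `u` along `w` so as to land in `v⊥`.
  set z := -(⟪v, u⟫_𝕜 / ⟪v, w⟫_𝕜) • w
  have hz : T z = (lam : 𝕜) • z := by rw [map_smul, hw, smul_comm]
  have hzu : ⟪z, u⟫_𝕜 = 0 := by rw [inner_smul_left, hu, mul_zero]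
  have hvx : ⟪v, u + z⟫_𝕜 = 0 := by
    rw [inner_add_right, inner_smul_right, neg_mul, div_mul_cancel₀ _ hvw, add_neg_cancel]
  have hx := hv _ hvx
  rw [re_inner_add_apply_add_of_eigenvector hT hz hzu,
    norm_add_sq_of_inner_eq_zero (inner_eq_zero_symm.1 hzu)] at hx
  nlinarith [sq_nonneg ‖z‖]

theorem sq_mul_sub_norm_inner_sq_le (hT : T.IsSymmetric) {v w : E} {lam c m : ℝ}
    (hw₁ : ‖w‖ = 1) (hw : T w = (lam : 𝕜) • w) (hcm : c ≤ m)
    (hc : ∀ u, ⟪w, u⟫_𝕜 = 0 → re ⟪u, T u⟫_𝕜 ≤ c * ‖u‖ ^ 2) :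
    (m - c) ^ 2 * (‖v‖ ^ 2 - ‖⟪w, v⟫_𝕜‖ ^ 2) ≤ ‖T v - (m : 𝕜) • v‖ ^ 2 := by
  set p := ⟪w, v⟫_𝕜 • w
  set u := v - p
  have hTp : T p = (lam : 𝕜) • p := by rw [map_smul, hw, smul_comm]
  have hwu : ⟪w, u⟫_𝕜 = 0 := by
    rw [inner_sub_right, inner_smul_right, inner_self_eq_norm_sq_to_K, hw₁]
    simp
  have hpu : ⟪p, u⟫_𝕜 = 0 := by rw [inner_smul_left, hwu, mul_zero]
  have hv : ‖v‖ ^ 2 = ‖u‖ ^ 2 + ‖⟪w, v⟫_𝕜‖ ^ 2 := by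
    rw [← mul_one ‖⟪w, v⟫_𝕜‖, ← hw₁, ← norm_smul,
      ← norm_add_sq_of_inner_eq_zero (inner_eq_zero_symm.1 hpu),
      sub_add_cancel]
  have hdecomp : T v - (m : 𝕜) • v = (T u - (m : 𝕜) • u) + ((lam - m : ℝ) : 𝕜) • p := by
    simp only [u, map_sub, hTp]
    module
  have horth : ⟪T u - (m : 𝕜) • u, ((lam - m : ℝ) : 𝕜) • p⟫_𝕜 = 0 := by
    rw [inner_smul_right, inner_sub_left, hT, hTp, inner_smul_right, inner_smul_left,
      inner_eq_zero_symm.1 hpu]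
    simp
  have hu := sub_mul_norm_le_norm_apply_sub_smul T (hc u hwu) m
  rw [hdecomp, norm_add_sq_of_inner_eq_zero horth, hv]
  nlinarith [mul_nonneg (sub_nonneg.2 hcm) (norm_nonneg u), sq_nonneg ‖((lam - m : ℝ) : 𝕜) • p‖]

theorem sq_mul_one_sub_norm_inner_sq_le_of_mixture (hT : T.IsSymmetric) {S : E →ₗ[𝕜] E}
    {v w : E} {μ β lam : ℝ} (hμ : 0 ≤ μ)
    (hTS : ∀ x, T x = ((1 - μ : ℝ) : 𝕜) • ⟪v, x⟫_𝕜 • v + (μ : 𝕜) • S x)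
    (hv : ‖v‖ = 1) (hSβ : ∀ x, re ⟪x, S x⟫_𝕜 ≤ β * ‖x‖ ^ 2)
    (hlam : ∀ x, re ⟪x, T x⟫_𝕜 ≤ lam * ‖x‖ ^ 2) (hw : ‖w‖ = 1) (hTw : T w = (lam : 𝕜) • w)
    (hΔ : μ * β < 1 - μ + μ * re ⟪v, S v⟫_𝕜) :
    (1 - μ + μ * re ⟪v, S v⟫_𝕜 - μ * β) ^ 2 * (1 - ‖⟪w, v⟫_𝕜‖ ^ 2) ≤
      μ ^ 2 * (‖S v‖ ^ 2 - re ⟪v, S v⟫_𝕜 ^ 2) := by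
  set a := re ⟪v, S v⟫_𝕜
  have hvv : ⟪v, v⟫_𝕜 = 1 := by simp [inner_self_eq_norm_sq_to_K, hv]
  have hTv : T v = ((1 - μ : ℝ) : 𝕜) • v + (μ : 𝕜) • S v := by rw [hTS, hvv, one_smul]
  have hm : 1 - μ + μ * a ≤ lam := by
    have hv' := hlam v
    rw [hTv, inner_add_right, inner_smul_right, inner_smul_right, hvv, map_add, re_ofReal_mul,
      re_ofReal_mul, hv] at hv'
    simpa [a] using hv'
  have hperp : ∀ x, ⟪v, x⟫_𝕜 = 0 → re ⟪x, T x⟫_𝕜 ≤ μ * β * ‖x‖ ^ 2 := by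
    intro x hx
    rw [hTS, hx, zero_smul, smul_zero, zero_add, inner_smul_right, re_ofReal_mul, mul_assoc]
    exact mul_le_mul_of_nonneg_left (hSβ x) hμ
  have hw₀ : w ≠ 0 := norm_ne_zero_iff.1 (hw ▸ one_ne_zero)
  have key := hT.sq_mul_sub_norm_inner_sq_le (v := v) hw hTw hΔ.le
    fun _ ↦ hT.re_inner_apply_le_of_inner_eq_zero hw₀ hTw (hΔ.trans_le hm) hperp
  have hdev : T v - ((1 - μ + μ * a : ℝ) : 𝕜) • v = (μ : 𝕜) • (S v - (a : 𝕜) • v) := by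
    rw [hTv]
    push_cast
    module
  rwa [hv, one_pow, hdev, norm_smul, mul_pow, norm_sub_re_inner_smul_sq hv, norm_ofReal,
    sq_abs] at key

end LinearMap.IsSymmetric

end InnerProductSpace

namespace Matrix

open scoped InnerProductSpace
open RCLike WithLp

variable {𝕜 : Type*} [RCLike 𝕜] {n : Type*} [Fintype n]

theorem inner_toLp_toLp_eq (x y : n → 𝕜) : ⟪toLp 2 x, toLp 2 y⟫_𝕜 = star x ⬝ᵥ y := by
  rw [EuclideanSpace.inner_toLp_toLp, dotProduct_comm]

theorem norm_toLp_eq_one {x : n → 𝕜} (hx : star x ⬝ᵥ x = 1) : ‖toLp 2 x‖ = 1 := by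
  rw [norm_eq_sqrt_re_inner (𝕜 := 𝕜), inner_toLp_toLp_eq, hx, one_re, Real.sqrt_one]

variable [DecidableEq n]

theorem inner_toLp_toEuclideanLin_toLp (A : Matrix n n 𝕜) (x y : n → 𝕜) :
    ⟪toLp 2 x, A.toEuclideanLin (toLp 2 y)⟫_𝕜 = star x ⬝ᵥ A *ᵥ y :=
  inner_toLp_toLp_eq x (A *ᵥ y)

theorem toEuclideanLin_vecMulVec_star (v : n → 𝕜) (x : EuclideanSpace 𝕜 n) :
    (vecMulVec v (star v)).toEuclideanLin x = ⟪toLp 2 v, x⟫_𝕜 • toLp 2 v := by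
  ext i
  simp [vecMulVec_mulVec, EuclideanSpace.inner_eq_star_dotProduct, dotProduct_comm, mul_comm]

open scoped MatrixOrder in
theorem IsHermitian.re_inner_toEuclideanLin_le {A : Matrix n n 𝕜} (hA : A.IsHermitian) {b : ℝ}
    (hb : ∀ i, hA.eigenvalues i ≤ b) (x : EuclideanSpace 𝕜 n) :
    re ⟪x, A.toEuclideanLin x⟫_𝕜 ≤ b * ‖x‖ ^ 2 := by
  have hle : A ≤ algebraMap ℝ _ b := by
    refine le_algebraMap_of_spectrum_le ?_ hA.isSelfAdjoint
    rw [hA.spectrum_real_eq_range_eigenvalues]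
    rintro _ ⟨i, rfl⟩
    exact hb i
  have hpos := (isPositive_toEuclideanLin_iff.2 hle).re_inner_nonneg_right x
  have hb : (algebraMap ℝ (Matrix n n 𝕜) b).toEuclideanLin x = (b : 𝕜) • x := by
    ext i
    simp [algebraMap_eq_diagonal, mulVec_diagonal, Algebra.smul_def]
  rw [map_sub, LinearMap.sub_apply, hb, inner_sub_right, map_sub, inner_smul_right,
    re_ofReal_mul, inner_self_eq_norm_sq] at hpos
  linarith

theorem PosSemidef.eigenvalues_le_re_trace {A : Matrix n n 𝕜} (hA : A.PosSemidef) (i : n) :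
    hA.1.eigenvalues i ≤ re A.trace := by
  rw [hA.1.trace_eq_sum_eigenvalues, map_sum]
  simp only [ofReal_re]
  exact Finset.single_le_sum (fun j _ ↦ hA.eigenvalues_nonneg j) (Finset.mem_univ i)

open scoped MatrixOrder in
theorem PosSemidef.re_dotProduct_mul_self_mulVec_le {A : Matrix n n 𝕜} (hA : A.PosSemidef)
    (h1 : ∀ i, hA.1.eigenvalues i ≤ 1) (x : n → 𝕜) :
    re (star x ⬝ᵥ (A * A) *ᵥ x) ≤ re (star x ⬝ᵥ A *ᵥ x) := by
  have hAA : A * A ≤ A := by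
    have h := cfc_mono (R := ℝ) (a := A) (f := fun x ↦ x ^ 2) (g := id) fun r hr ↦ by
      rw [hA.1.spectrum_real_eq_range_eigenvalues] at hr
      obtain ⟨i, rfl⟩ := hr
      rw [id]
      nlinarith [h1 i, hA.eigenvalues_nonneg i]
    rwa [cfc_pow_id A 2 hA.1.isSelfAdjoint, cfc_id ℝ A hA.1.isSelfAdjoint, sq] at h
  have hx := (le_iff.1 hAA).re_dotProduct_nonneg x
  rwa [sub_mulVec, dotProduct_sub, map_sub, sub_nonneg] at hx

theorem sq_mul_one_sub_norm_dotProduct_sq_le_of_mixture {v w : n → 𝕜} {ω ρ : Matrix n n 𝕜}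
    {μ β lam : ℝ} (hμ : 0 ≤ μ) (hv : star v ⬝ᵥ v = 1) (hω : ω.IsHermitian)
    (hωβ : ∀ i, hω.eigenvalues i ≤ β)
    (hρω : ρ = ((1 - μ : ℝ) : 𝕜) • vecMulVec v (star v) + (μ : 𝕜) • ω)
    (hρ : ρ.IsHermitian) (hlam : ∀ i, hρ.eigenvalues i ≤ lam) (hw : star w ⬝ᵥ w = 1)
    (hρw : ρ *ᵥ w = (lam : 𝕜) • w) (hΔ : μ * β < 1 - μ + μ * re (star v ⬝ᵥ ω *ᵥ v)) :
    (1 - μ + μ * re (star v ⬝ᵥ ω *ᵥ v) - μ * β) ^ 2 * (1 - ‖star w ⬝ᵥ v‖ ^ 2) ≤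
      μ ^ 2 * (re (star v ⬝ᵥ (ω * ω) *ᵥ v) - re (star v ⬝ᵥ ω *ᵥ v) ^ 2) := by
  have hTS : ∀ x, ρ.toEuclideanLin x =
      ((1 - μ : ℝ) : 𝕜) • ⟪toLp 2 v, x⟫_𝕜 • toLp 2 v + (μ : 𝕜) • ω.toEuclideanLin x := by
    intro x
    rw [hρω, map_add, map_smul, map_smul, LinearMap.add_apply, LinearMap.smul_apply,
      LinearMap.smul_apply, toEuclideanLin_vecMulVec_star]
  have hSS : ‖ω.toEuclideanLin (toLp 2 v)‖ ^ 2 = re (star v ⬝ᵥ (ω * ω) *ᵥ v) := by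
    rw [← inner_self_eq_norm_sq (𝕜 := 𝕜), isSymmetric_toEuclideanLin_iff.2 hω, ← mulVec_mulVec]
    exact congrArg re (inner_toLp_toLp_eq v _)
  have key := (isSymmetric_toEuclideanLin_iff.2 hρ).sq_mul_one_sub_norm_inner_sq_le_of_mixture
    hμ hTS (norm_toLp_eq_one hv) (hω.re_inner_toEuclideanLin_le hωβ)
    (hρ.re_inner_toEuclideanLin_le hlam) (norm_toLp_eq_one hw)
    (by rw [toLpLin_toLp]; exact congrArg (toLp 2) hρw)
    (by rwa [inner_toLp_toEuclideanLin_toLp])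
  rwa [inner_toLp_toEuclideanLin_toLp, inner_toLp_toLp_eq, hSS] at key

end Matrix

theorem overlap_with_top_eigenvector_general (n : ℕ) (μ : ℝ) (hμ0 : 0 < μ)
    (v : Fin n → ℂ) (hv : star v ⬝ᵥ v = 1)
    (ω : Matrix (Fin n) (Fin n) ℂ) (hω : ω.PosSemidef) (hωtr : ω.trace = 1)
    (ρ : Matrix (Fin n) (Fin n) ℂ)
    (hρdef : ρ = ((1 - μ : ℝ) : ℂ) • vecMulVec v (star v) + (μ : ℂ) • ω)
    (hρ : ρ.PosSemidef)
    (a β Δ : ℝ)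
    (ha : a = (star v ⬝ᵥ ω *ᵥ v).re)
    (hβ : β = ⨆ k, hω.1.eigenvalues k)
    (hΔ : Δ = 1 - μ + μ * a - μ * β) (hΔpos : 0 < Δ)
    (lam₁ : ℝ) (hlam₁ : ∀ i, hρ.1.eigenvalues i ≤ lam₁)
    (w : Fin n → ℂ) (hw : star w ⬝ᵥ w = 1)
    (hweig : ρ *ᵥ w = (lam₁ : ℂ) • w) :
    1 - ‖star w ⬝ᵥ v‖ ^ 2 ≤ μ ^ 2 * ((star v ⬝ᵥ (ω * ω) *ᵥ v).re - a ^ 2) / Δ ^ 2 ∧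
      μ ^ 2 * ((star v ⬝ᵥ (ω * ω) *ᵥ v).re - a ^ 2) / Δ ^ 2 ≤ μ ^ 2 * a / Δ ^ 2 := by
  have hωβ : ∀ i, hω.1.eigenvalues i ≤ β :=
    fun i ↦ hβ ▸ le_ciSup (Set.finite_range _).bddAbove i
  have hkey := sq_mul_one_sub_norm_dotProduct_sq_le_of_mixture hμ0.le hv hω.1 hωβ hρdef hρ.1
    hlam₁ hw hweig (by rw [RCLike.re_to_complex, ← ha]; linarith)
  rw [RCLike.re_to_complex, RCLike.re_to_complex, ← ha, ← hΔ] at hkey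
  have hωω : (star v ⬝ᵥ (ω * ω) *ᵥ v).re ≤ a := by
    have hω1 i : hω.1.eigenvalues i ≤ 1 := by
      simpa [hωtr] using hω.eigenvalues_le_re_trace i
    simpa [ha] using hω.re_dotProduct_mul_self_mulVec_le hω1 v
  constructor
  · rw [le_div_iff₀ (by positivity)]
    linarith
  · gcongr
    nlinarith [sq_nonneg a]

/-- For ρ = (1-μ)|v⟩⟨v| + μω with |v⟩ a unit vector, ω a density matrix, 0 < μ < 1,
a = ⟨v|ω|v⟩, β = ‖ω‖_∞, Δ = 1 - μ + μa - μβ > 0, and |λ₁⟩ a unit eigenvector of ρ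
for its largest eigenvalue λ₁, one has
1 - |⟨λ₁|v⟩|² ≤ μ²(⟨v|ω²|v⟩ - a²)/Δ² ≤ μ²a/Δ². -/
theorem overlap_with_top_eigenvector (n : ℕ) (μ : ℝ) (hμ0 : 0 < μ) (hμ1 : μ < 1)
    (v : Fin n → ℂ) (hv : star v ⬝ᵥ v = 1)
    (ω : Matrix (Fin n) (Fin n) ℂ) (hω : ω.PosSemidef) (hωtr : ω.trace = 1)
    (ρ : Matrix (Fin n) (Fin n) ℂ)
    (hρdef : ρ = ((1 - μ : ℝ) : ℂ) • vecMulVec v (star v) + (μ : ℂ) • ω)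
    (hρ : ρ.PosSemidef) (hρtr : ρ.trace = 1)
    (a β Δ : ℝ)
    (ha : a = (star v ⬝ᵥ ω *ᵥ v).re)
    (hβ : β = ⨆ k, hω.1.eigenvalues k)
    (hΔ : Δ = 1 - μ + μ * a - μ * β) (hΔpos : 0 < Δ)
    (lam₁ : ℝ) (hlam₁ : ∀ i, hρ.1.eigenvalues i ≤ lam₁)
    (w : Fin n → ℂ) (hw : star w ⬝ᵥ w = 1)
    (hweig : ρ *ᵥ w = (lam₁ : ℂ) • w) :
    1 - ‖star w ⬝ᵥ v‖ ^ 2 ≤ μ ^ 2 * ((star v ⬝ᵥ (ω * ω) *ᵥ v).re - a ^ 2) / Δ ^ 2 ∧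
      μ ^ 2 * ((star v ⬝ᵥ (ω * ω) *ᵥ v).re - a ^ 2) / Δ ^ 2 ≤ μ ^ 2 * a / Δ ^ 2 :=
  overlap_with_top_eigenvector_general n μ hμ0 v hv ω hω hωtr ρ hρdef hρ a β Δ ha hβ hΔ hΔpos lam₁
    hlam₁ w hw hweig
end

section
/- Let H and ΔH be Hermitian operators on a finite-dimensional Hilbert space, β ≥ 0, and Z(β) = tr(e^{-βH}). Then (1/Z(β)) tr(e^{-βH/2} e^{-β(H+ΔH)/2}) ≥ e^{-β‖ΔH‖/2}, where ‖ΔH‖ is the operator norm. -/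
/-!
Let `uᵢ` be the eigenvectors of `H`, with eigenvalues `Eᵢ`, and put `c = -β/2`. Expanding the
trace in this basis gives `tr (e^{cH} e^{c(H+ΔH)}) = ∑ᵢ e^{c Eᵢ} ⟨uᵢ, e^{c(H+ΔH)} uᵢ⟩`. In the
eigenbasis `vₖ` of any Hermitian `A`, `⟨u, f(A) u⟩ = ∑ₖ |⟨u, vₖ⟩|² f(λₖ)` is an average of the
`f(λₖ)` for a unit vector `u`, so Jensen for `exp` gives the Peierls–Bogoliubov inequality
`⟨u, e^{cA} u⟩ ≥ e^{c ⟨u, A u⟩}`, and `⟨u, ΔH u⟩ ≤ maxₖ |μₖ|`. Since `c ≤ 0`, each summand is at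
least `e^{c Eᵢ} e^{c (Eᵢ + ‖ΔH‖)} = e^{-β‖ΔH‖/2} e^{-β Eᵢ}`, and summing over `i` yields
`e^{-β‖ΔH‖/2} Z(β)`.
-/

namespace Matrix

variable {ι : Type*} [Fintype ι] [DecidableEq ι]

theorem sum_normSq_apply_eq_one {W : Matrix ι ι ℂ} (hW : W ∈ unitaryGroup ι ℂ) (i : ι) :
    ∑ k, Complex.normSq (W i k) = 1 := by
  have h : (W * star W) i i = 1 := by rw [mem_unitaryGroup_iff.mp hW, one_apply_eq]
  rw [mul_apply] at h
  have h' : ((∑ k, Complex.normSq (W i k) : ℝ) : ℂ) = 1 := by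
    rw [← h, Complex.ofReal_sum]
    exact Finset.sum_congr rfl fun k _ => by rw [star_apply, Complex.star_def, Complex.mul_conj]
  exact_mod_cast h'

theorem mul_diagonal_mul_star_apply_self (W : Matrix ι ι ℂ) (d : ι → ℝ) (i : ι) :
    (W * diagonal (fun k => (d k : ℂ)) * star W) i i =
      ↑(∑ k, Complex.normSq (W i k) * d k) := by
  rw [mul_apply, Complex.ofReal_sum]
  refine Finset.sum_congr rfl fun k _ => ?_
  rw [mul_diagonal, star_apply, Complex.star_def, mul_right_comm, Complex.mul_conj,
    Complex.ofReal_mul]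

theorem star_mul_conj_diagonal_mul_apply_self (U V : Matrix ι ι ℂ) (d : ι → ℝ) (i : ι) :
    (star U * (V * diagonal (fun k => (d k : ℂ)) * star V) * U) i i =
      ↑(∑ k, Complex.normSq ((star U * V) i k) * d k) := by
  rw [← mul_diagonal_mul_star_apply_self, star_mul, star_star]
  simp only [mul_assoc]

theorem trace_mul_diagonal_mul_star_mul (U X : Matrix ι ι ℂ) (d : ι → ℂ) :
    trace (U * diagonal d * star U * X) = ∑ i, d i * (star U * X * U) i i := by
  rw [mul_assoc, mul_assoc, trace_mul_comm, mul_assoc]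
  simp [trace, diagonal_mul]

namespace IsHermitian

variable {A : Matrix ι ι ℂ} (hA : A.IsHermitian)
include hA

theorem eq_mul_diagonal_mul_star :
    A = hA.eigenvectorUnitary * diagonal (fun k => (hA.eigenvalues k : ℂ)) *
      star (hA.eigenvectorUnitary : Matrix ι ι ℂ) :=
  hA.spectral_theorem

theorem exp_real_smul (c : ℝ) :
    NormedSpace.exp ((c : ℂ) • A) = hA.eigenvectorUnitary *
      diagonal (fun k => (Real.exp (c * hA.eigenvalues k) : ℂ)) *
      star (hA.eigenvectorUnitary : Matrix ι ι ℂ) := by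
  set u := hA.eigenvectorUnitary
  have hconj : (c : ℂ) • A = (Unitary.toUnits u : Matrix ι ι ℂ) *
      diagonal (fun k => (c : ℂ) * hA.eigenvalues k) *
      ((Unitary.toUnits u)⁻¹ : (Matrix ι ι ℂ)ˣ) := by
    conv_lhs => rw [hA.eq_mul_diagonal_mul_star]
    have hdiag : diagonal (fun k => (c : ℂ) * hA.eigenvalues k) =
        (c : ℂ) • diagonal (fun k => (hA.eigenvalues k : ℂ)) := by
      rw [← diagonal_smul]; rfl
    rw [hdiag, Matrix.mul_smul, Matrix.smul_mul]
    rfl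
  rw [hconj, exp_units_conj, exp_diagonal]
  simp [Pi.exp_def, ← Complex.exp_eq_exp_ℂ]

theorem trace_exp_real_smul (c : ℝ) :
    trace (NormedSpace.exp ((c : ℂ) • A)) = ∑ k, (Real.exp (c * hA.eigenvalues k) : ℂ) := by
  rw [hA.exp_real_smul, trace_mul_cycle, Unitary.coe_star_mul_self, one_mul, trace_diagonal]

theorem star_eigenvectorUnitary_mul_mul_apply_self (i : ι) :
    (star (hA.eigenvectorUnitary : Matrix ι ι ℂ) * A * hA.eigenvectorUnitary) i i =
      hA.eigenvalues i := by
  rw [← Unitary.conjStarAlgAut_star_apply (S := ℂ), conjStarAlgAut_star_eigenvectorUnitary,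
    diagonal_apply_eq]
  rfl

theorem star_mul_mul_apply_self_re (U : Matrix ι ι ℂ) (i : ι) :
    ((star U * A * U) i i).re =
      ∑ k, Complex.normSq ((star U * hA.eigenvectorUnitary) i k) * hA.eigenvalues k := by
  conv_lhs => rw [hA.eq_mul_diagonal_mul_star]
  rw [star_mul_conj_diagonal_mul_apply_self, Complex.ofReal_re]

theorem star_mul_exp_real_smul_mul_apply_self_re (U : Matrix ι ι ℂ) (c : ℝ) (i : ι) :
    ((star U * NormedSpace.exp ((c : ℂ) • A) * U) i i).re =
      ∑ k, Complex.normSq ((star U * hA.eigenvectorUnitary) i k) *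
        Real.exp (c * hA.eigenvalues k) := by
  rw [hA.exp_real_smul, star_mul_conj_diagonal_mul_apply_self, Complex.ofReal_re]

variable {U : Matrix ι ι ℂ} (hU : U ∈ unitaryGroup ι ℂ)
include hU

theorem sum_normSq_star_mul_eigenvectorUnitary_apply (i : ι) :
    ∑ k, Complex.normSq ((star U * hA.eigenvectorUnitary) i k) = 1 :=
  sum_normSq_apply_eq_one (mul_mem (Unitary.star_mem hU) hA.eigenvectorUnitary.2) i

/-- Peierls–Bogoliubov inequality `e^{c ⟨u, A u⟩} ≤ ⟨u, e^{cA} u⟩`, for `u` the `i`-th column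
of `U`. -/
theorem exp_mul_star_mul_mul_apply_self_re_le (c : ℝ) (i : ι) :
    Real.exp (c * ((star U * A * U) i i).re) ≤
      ((star U * NormedSpace.exp ((c : ℂ) • A) * U) i i).re := by
  rw [hA.star_mul_mul_apply_self_re, hA.star_mul_exp_real_smul_mul_apply_self_re,
    Finset.mul_sum]
  simp_rw [mul_left_comm c]
  exact convexOn_exp.map_sum_le (fun k _ => Complex.normSq_nonneg _)
    (hA.sum_normSq_star_mul_eigenvectorUnitary_apply hU i) (fun k _ => Set.mem_univ _)

theorem star_mul_mul_apply_self_re_le_iSup_abs_eigenvalues (i : ι) :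
    ((star U * A * U) i i).re ≤ ⨆ k, |hA.eigenvalues k| := by
  rw [hA.star_mul_mul_apply_self_re, ← one_mul (⨆ k, |hA.eigenvalues k|),
    ← hA.sum_normSq_star_mul_eigenvectorUnitary_apply hU i, Finset.sum_mul]
  refine Finset.sum_le_sum fun k _ => mul_le_mul_of_nonneg_left ?_ (Complex.normSq_nonneg _)
  exact (le_abs_self _).trans
    (le_ciSup (f := fun k => |hA.eigenvalues k|) (Set.finite_range _).bddAbove k)

end IsHermitian

end Matrix

open Matrix

/-- For Hermitian H, ΔH, β ≥ 0 and Z(β) = tr(e^{-βH}),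
(1/Z(β)) tr(e^{-βH/2} e^{-β(H+ΔH)/2}) ≥ e^{-β‖ΔH‖/2}, where ‖ΔH‖ is the operator norm,
i.e. the largest absolute value of an eigenvalue of the Hermitian matrix ΔH. -/
theorem gibbs_overlap_lower_bound (n : ℕ) (hn : 0 < n)
    (H ΔH : Matrix (Fin n) (Fin n) ℂ) (hH : H.IsHermitian) (hΔH : ΔH.IsHermitian)
    (β : ℝ) (hβ : 0 ≤ β)
    (Z : ℝ) (hZ : Z = (Matrix.trace (NormedSpace.exp ((-β : ℂ) • H))).re)
    (nrm : ℝ) (hnrm : nrm = ⨆ i, |hΔH.eigenvalues i|) :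
    Real.exp (-β * nrm / 2) ≤
      (1 / Z) * (Matrix.trace (NormedSpace.exp ((-(β / 2) : ℂ) • H) *
        NormedSpace.exp ((-(β / 2) : ℂ) • (H + ΔH)))).re := by
  have : Nonempty (Fin n) := ⟨⟨0, hn⟩⟩
  set U := hH.eigenvectorUnitary
  set E := hH.eigenvalues
  set B := H + ΔH
  set c : ℝ := -(β / 2) with hc_def
  have hZE : Z = ∑ i, Real.exp (-β * E i) := by
    rw [hZ, ← Complex.ofReal_neg, hH.trace_exp_real_smul, ← Complex.ofReal_sum, Complex.ofReal_re]
  have hdiag (i : Fin n) : Real.exp (c * (E i + nrm)) ≤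
      ((star (U : Matrix (Fin n) (Fin n) ℂ) * NormedSpace.exp ((c : ℂ) • B) * U) i i).re := by
    refine le_trans ?_ ((hH.add hΔH).exp_mul_star_mul_mul_apply_self_re_le U.2 c i)
    rw [Real.exp_le_exp]
    refine mul_le_mul_of_nonpos_left ?_ (by linarith [hc_def])
    rw [mul_add, add_mul, Matrix.add_apply, Complex.add_re,
      hH.star_eigenvectorUnitary_mul_mul_apply_self, Complex.ofReal_re, hnrm]
    exact add_le_add_right (hΔH.star_mul_mul_apply_self_re_le_iSup_abs_eigenvalues U.2 i) _
  have hc : (-(β / 2) : ℂ) = (c : ℂ) := by rw [hc_def]; push_cast; ring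
  rw [hc, hH.exp_real_smul, trace_mul_diagonal_mul_star_mul, hZE, one_div, inv_mul_eq_div,
    le_div_iff₀ (by positivity), Finset.mul_sum, Complex.re_sum]
  refine Finset.sum_le_sum fun i _ => ?_
  calc Real.exp (-β * nrm / 2) * Real.exp (-β * E i)
      = Real.exp (c * E i) * Real.exp (c * (E i + nrm)) := by
        rw [← Real.exp_add, ← Real.exp_add, hc_def]; ring_nf
    _ ≤ _ := by
        rw [Complex.re_ofReal_mul]
        exact mul_le_mul_of_nonneg_left (hdiag i) (Real.exp_pos _).le
end

section
/- Let (qᵢ) and (pᵢ) be two probability distributions on a finite index set, listed in decreasing order, and let α > 1. Then Σᵢ √(qᵢ pᵢ) ≤ (Σᵢ √qᵢ)^{1 - 1/α} (Σᵢ pᵢ^α)^{1/(2α)}. -/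
open BigOperators

open Finset Real

theorem sqrt_rpow_eq_rpow_sqrt {x : ℝ} (hx : 0 ≤ x) (y : ℝ) : √(x ^ y) = √x ^ y := by
  rw [sqrt_eq_rpow, sqrt_eq_rpow, ← rpow_mul hx, ← rpow_mul hx, mul_comm]

theorem sum_sqrt_mul_le_holder {ι : Type*} (s : Finset ι) {q p : ι → ℝ}
    (hq : ∀ i, 0 ≤ q i) (hp : ∀ i, 0 ≤ p i) {α : ℝ} (hα : 1 ≤ α) :
    ∑ i ∈ s, √(q i * p i) ≤
      (∑ i ∈ s, √(q i)) ^ (1 - α⁻¹) * (√(∑ i ∈ s, q i) * √(∑ i ∈ s, p i ^ α)) ^ α⁻¹ := by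
  have cauchy_schwarz : ∑ i ∈ s, √(q i) * √(p i) ^ α ≤ √(∑ i ∈ s, q i) * √(∑ i ∈ s, p i ^ α) := by
    simpa only [sqrt_rpow_eq_rpow_sqrt (hp _)] using
      sum_sqrt_mul_sqrt_le s hq fun i => rpow_nonneg (hp i) α
  calc ∑ i ∈ s, √(q i * p i) = ∑ i ∈ s, √(q i) * √(p i) :=
        sum_congr rfl fun i _ => sqrt_mul (hq i) _
    _ ≤ (∑ i ∈ s, √(q i)) ^ (1 - α⁻¹) * (∑ i ∈ s, √(q i) * √(p i) ^ α) ^ α⁻¹ :=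
        inner_le_weight_mul_Lp_of_nonneg s hα _ _ (fun _ => sqrt_nonneg _) fun _ => sqrt_nonneg _
    _ ≤ _ := by gcongr

theorem schmidt_overlap_holder_general (n : ℕ)
    (q p : Fin n → ℝ) (hq0 : ∀ i, 0 ≤ q i) (hp0 : ∀ i, 0 ≤ p i)
    (hqsum : ∑ i, q i = 1)
    (α : ℝ) (hα : 1 < α) :
    ∑ i, Real.sqrt (q i * p i) ≤
      (∑ i, Real.sqrt (q i)) ^ (1 - 1 / α) * (∑ i, (p i) ^ α) ^ (1 / (2 * α)) := by
  have key := sum_sqrt_mul_le_holder univ hq0 hp0 hα.le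
  rw [hqsum, sqrt_one, one_mul, sqrt_eq_rpow,
    ← rpow_mul (sum_nonneg fun i _ => rpow_nonneg (hp0 i) α)] at key
  convert key using 3 <;> field_simp

/-- For probability distributions (qᵢ), (pᵢ) listed in decreasing order and α > 1,
∑ᵢ √(qᵢpᵢ) ≤ (∑ᵢ √qᵢ)^{1 - 1/α} (∑ᵢ pᵢ^α)^{1/(2α)}. -/
theorem schmidt_overlap_holder (n : ℕ)
    (q p : Fin n → ℝ) (hq0 : ∀ i, 0 ≤ q i) (hp0 : ∀ i, 0 ≤ p i)
    (hqsum : ∑ i, q i = 1) (hpsum : ∑ i, p i = 1)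
    (hqdec : ∀ i j : Fin n, i ≤ j → q j ≤ q i)
    (hpdec : ∀ i j : Fin n, i ≤ j → p j ≤ p i)
    (α : ℝ) (hα : 1 < α) :
    ∑ i, Real.sqrt (q i * p i) ≤
      (∑ i, Real.sqrt (q i)) ^ (1 - 1 / α) * (∑ i, (p i) ^ α) ^ (1 / (2 * α)) :=
  schmidt_overlap_holder_general n q p hq0 hp0 hqsum α hα
end
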